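/- Suppose p ∈ (0,1] and θ ∈ J_γ \ J_{γ,T}. If z ∈ ℂ satisfies p(z, θ) = 0, then Im z = 0. -/
import Mathlib


noncomputable section

/-- The arc `J_γ`. -/
def Jgamma (p γ : ℝ) : Set ℝ :=
  Set.Icc (Real.arccos p + γ / 2) (Real.pi - Real.arccos p + γ / 2) ∪
    Set.Icc (Real.pi + Real.arccos p + γ / 2) (2 * Real.pi - Real.arccos p + γ / 2)

/-- The threshold set `J_{γ,T}`. -/
def JgammaT (p γ : ℝ) : Set ℝ :=
  {Real.arccos p + γ / 2, Real.pi - Real.arccos p + γ / 2,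
    Real.pi + Real.arccos p + γ / 2, 2 * Real.pi - Real.arccos p + γ / 2}

/-- `p(z,θ) = det(Û₀(ξ) - e^{iθ})`, as a function of a complex variable `z`. -/
def Pdet (p α γ : ℝ) (z : ℂ) (θ : ℝ) : ℂ :=
  Complex.exp (2 * θ * Complex.I) -
    2 * Complex.exp (θ * Complex.I) * (p : ℂ) * Complex.exp ((γ / 2 : ℝ) * Complex.I) *
      Complex.cos (z + α - γ / 2) +
    Complex.exp (γ * Complex.I)

/-- for `θ ∈ J_γ \ J_{γ,T}`, every complex zero of `z ↦ p(z,θ)` is real. -/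
theorem zeros_are_real
    (p α γ : ℝ) (hp : p ∈ Set.Ioc (0 : ℝ) 1)
    (hα : α ∈ Set.Ico 0 (2 * Real.pi)) (hγ : γ ∈ Set.Ico 0 (2 * Real.pi))
    (θ : ℝ) (hθ : θ ∈ Jgamma p γ \ JgammaT p γ)
    (z : ℂ) (hz : Pdet p α γ z θ = 0) :
    z.im = 0 := by
  obtain ⟨hθJ, hθT⟩ := hθ
  simp only [JgammaT, Set.mem_insert_iff, Set.mem_singleton_iff, not_or] at hθT
  obtain ⟨h1, h2, h3, h4⟩ := hθT
  have hp0 : 0 < p := hp.1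
  have hp1 : p ≤ 1 := hp.2
  have hap : Real.cos (Real.arccos p) = p := Real.cos_arccos (by linarith) hp1
  have ha0 : 0 ≤ Real.arccos p := Real.arccos_nonneg p
  have hapi2 : Real.arccos p ≤ Real.pi / 2 := Real.arccos_le_pi_div_two.2 hp0.le
  have hpi : 0 < Real.pi := Real.pi_pos
  -- `|cos (θ - γ/2)| < p`
  have key : ∀ s : ℝ, Real.arccos p < s → s < Real.pi - Real.arccos p → |Real.cos s| < p := by
    intro s hs1 hs2
    have hmem : s ∈ Set.Icc 0 Real.pi := ⟨by linarith, by linarith⟩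
    have hc1 : Real.cos s < p := by
      rw [← hap]
      exact Real.strictAntiOn_cos ⟨ha0, by linarith⟩ hmem hs1
    have hc2 : -p < Real.cos s := by
      have := Real.strictAntiOn_cos hmem ⟨by linarith, by linarith⟩ hs2
      rw [Real.cos_pi_sub, hap] at this
      linarith
    rw [abs_lt]; exact ⟨hc2, hc1⟩
  have hcos : |Real.cos (θ - γ / 2)| < p := by
    rcases hθJ with h | h <;> rw [Set.mem_Icc] at h <;> obtain ⟨hl, hr⟩ := h
    · have hlt1 : Real.arccos p < θ - γ / 2 := by
        rcases lt_or_eq_of_le hl with h' | h'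
        · linarith
        · exact absurd h'.symm h1
      have hlt2 : θ - γ / 2 < Real.pi - Real.arccos p := by
        rcases lt_or_eq_of_le hr with h' | h'
        · linarith
        · exact absurd h' h2
      exact key _ hlt1 hlt2
    · have hlt1 : Real.arccos p < 2 * Real.pi - (θ - γ / 2) := by
        rcases lt_or_eq_of_le hr with h' | h'
        · linarith
        · exact absurd h' h4
      have hlt2 : 2 * Real.pi - (θ - γ / 2) < Real.pi - Real.arccos p := by
        rcases lt_or_eq_of_le hl with h' | h'
        · linarith
        · exact absurd h'.symm h3
      have := key _ hlt1 hlt2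
      rwa [Real.cos_two_pi_sub] at this
  -- algebraic reduction
  set w : ℂ := z + (α : ℂ) - (γ : ℂ) / 2 with hw
  have hwim : w.im = z.im := by simp [hw]
  set a := Complex.exp ((θ : ℂ) * Complex.I) with ha
  set b := Complex.exp (((γ / 2 : ℝ) : ℂ) * Complex.I) with hb
  have ha0' : a ≠ 0 := Complex.exp_ne_zero _
  have hb0' : b ≠ 0 := Complex.exp_ne_zero _
  have hz' : a ^ 2 - 2 * a * (p : ℂ) * b * Complex.cos w + b ^ 2 = 0 := by
    have e1 : Complex.exp (2 * (θ : ℂ) * Complex.I) = a ^ 2 := by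
      rw [ha, sq, ← Complex.exp_add]; congr 1; ring
    have e2 : Complex.exp ((γ : ℂ) * Complex.I) = b ^ 2 := by
      rw [hb, sq, ← Complex.exp_add]; congr 1; push_cast; ring
    rw [← e1, ← e2]
    rw [Pdet] at hz
    convert hz using 2
  have hct : Complex.cos (((θ - γ / 2 : ℝ)) : ℂ) = (a / b + b / a) / 2 := by
    rw [Complex.cos]
    have e1 : ((θ - γ / 2 : ℝ) : ℂ) * Complex.I
        = (θ : ℂ) * Complex.I - ((γ / 2 : ℝ) : ℂ) * Complex.I := by
      push_cast; ring
    have e2 : -((θ - γ / 2 : ℝ) : ℂ) * Complex.I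
        = ((γ / 2 : ℝ) : ℂ) * Complex.I - (θ : ℂ) * Complex.I := by
      push_cast; ring
    rw [e1, e2, Complex.exp_sub, Complex.exp_sub, ← ha, ← hb]
  have key2 : ((Real.cos (θ - γ / 2) : ℝ) : ℂ) = (p : ℂ) * Complex.cos w := by
    rw [Complex.ofReal_cos, hct]
    field_simp
    linear_combination hz'
  have hre' : (Complex.cos w).re = Real.cos w.re * Real.cosh w.im := by
    rw [Complex.cos_eq]; simp [Complex.cos_ofReal_re, Complex.cosh_ofReal_re, Complex.sin_ofReal_re, Complex.sinh_ofReal_re]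
  have him' : (Complex.cos w).im = -(Real.sin w.re * Real.sinh w.im) := by
    rw [Complex.cos_eq]; simp [Complex.cos_ofReal_re, Complex.cosh_ofReal_re, Complex.sin_ofReal_re, Complex.sinh_ofReal_re]
  have him : Real.sin w.re * Real.sinh w.im = 0 := by
    have h0 := congrArg Complex.im key2
    rw [Complex.ofReal_im, Complex.im_ofReal_mul, him'] at h0
    have : p * (Real.sin w.re * Real.sinh w.im) = 0 := by linarith
    exact (mul_eq_zero.1 this).resolve_left hp0.ne'
  rcases mul_eq_zero.1 him with hs | hs
  · exfalso
    have hre := congrArg Complex.re key2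
    rw [Complex.ofReal_re, Complex.re_ofReal_mul, hre'] at hre
    have habs : |Real.cos w.re| = 1 := by
      have h2' : Real.cos w.re ^ 2 = 1 := by nlinarith [Real.sin_sq_add_cos_sq w.re]
      rw [← Real.sqrt_sq_eq_abs, h2', Real.sqrt_one]
    have hch : 1 ≤ Real.cosh w.im := Real.one_le_cosh w.im
    have : p ≤ |Real.cos (θ - γ / 2)| := by
      rw [hre, abs_mul, abs_mul, habs, abs_of_pos hp0, abs_of_pos (Real.cosh_pos w.im)]
      nlinarith
    linarith
  · rw [Real.sinh_eq_zero] at hs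
    rw [← hwim]; exact hs
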